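/- arXiv:2510.10598 — 5 statements merged into one kernel-verified Lean document; each statement's English description precedes it below -/
import Mathlib

section
/- For 0 < t < 1, the sum ∑_{n≥1} (2n-1) t^{2n-1}/(1 + t^{2n-1}), with ρ := -log t, equals π²/(24 ρ²) + O(1/ρ) as ρ → 0⁺. -/
/-!
Expanding `1 / (1 + q) = ∑ (-1)^k q^k` and swapping the absolutely convergent double sum gives
`S(ρ) = ∑_{k ≥ 0} (-1)^k g((k+1)ρ)` with `g(s) = ∑_n (2n+1) e^{-(2n+1)s} = cosh s / (2 sinh² s)`.
Since `|g(s) - 1/(2s²)| ≤ 8/(1+s)²` for all `s > 0` (Taylor expansion for `s ≤ 1`, exponential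
decay of `g` for `s ≥ 1`), replacing `g` by `1/(2s²)` yields the main term
`(1/(2ρ²)) ∑ (-1)^k/(k+1)² = π²/(24ρ²)`, with an error of at most `∑_k 8/(1+(k+1)ρ)² ≤ 8/ρ`
by comparison with a telescoping sum.
-/

open Real Finset

theorem hasSum_alternating_pow_succ {𝕜 : Type*} [NormedField 𝕜] {x : 𝕜} (hx : ‖x‖ < 1) :
    HasSum (fun k : ℕ => (-1) ^ k * x ^ (k + 1)) (x / (1 + x)) := by
  have h := (hasSum_geometric_of_norm_lt_one (ξ := -x) (by rwa [norm_neg])).mul_left x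
  rw [sub_neg_eq_add, ← div_eq_mul_inv] at h
  exact h.congr_fun fun k => by rw [neg_pow]; ring

theorem tsum_mul_div_one_add_eq_tsum_alternating {c x : ℕ → ℝ} {q : ℝ} (hq : q < 1)
    (hx : ∀ n, |x n| ≤ q) (hc : Summable fun n => c n * x n) :
    ∑' n, c n * x n / (1 + x n) = ∑' k : ℕ, (-1) ^ k * ∑' n, c n * x n ^ (k + 1) := by
  set f : ℕ → ℕ → ℝ := fun n k => (-1) ^ k * (c n * x n ^ (k + 1))
  have hrow : ∀ n, HasSum (f n) (c n * x n / (1 + x n)) := fun n => by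
    have := (hasSum_alternating_pow_succ ((hx n).trans_lt hq)).mul_left (c n)
    rw [← mul_div_assoc] at this
    exact this.congr_fun fun k => by ring
  have hq0 : 0 ≤ q := (abs_nonneg _).trans (hx 0)
  have hf : Summable (Function.uncurry f) := by
    refine Summable.of_norm_bounded (g := fun p : ℕ × ℕ => |c p.1 * x p.1| * q ^ p.2)
      (hc.abs.mul_of_nonneg (summable_geometric_of_lt_one hq0 hq)
        (fun _ => abs_nonneg _) (fun _ => pow_nonneg hq0 _)) fun ⟨n, k⟩ => ?_
    simp only [Function.uncurry_apply_pair, f, norm_eq_abs, abs_mul, abs_pow, abs_neg, abs_one,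
      one_pow, one_mul, pow_succ]
    rw [← mul_assoc, mul_right_comm]
    exact mul_le_mul_of_nonneg_left (pow_le_pow_left₀ (abs_nonneg _) (hx n) k)
      (mul_nonneg (abs_nonneg _) (abs_nonneg _))
  calc ∑' n, c n * x n / (1 + x n) = ∑' n, ∑' k, f n k :=
        tsum_congr fun n => (hrow n).tsum_eq.symm
    _ = ∑' k, ∑' n, f n k := hf.tsum_comm.symm
    _ = _ := tsum_congr fun k => tsum_mul_left

theorem hasSum_odd_mul_pow_odd {𝕜 : Type*} [NormedField 𝕜] {x : 𝕜} (hx : ‖x‖ < 1) :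
    HasSum (fun n : ℕ => (2 * (n : 𝕜) + 1) * x ^ (2 * n + 1))
      (x * (1 + x ^ 2) / (1 - x ^ 2) ^ 2) := by
  have hx2 : ‖x ^ 2‖ < 1 := by rw [norm_pow]; exact pow_lt_one₀ (norm_nonneg x) hx two_ne_zero
  have hne : 1 - x ^ 2 ≠ 0 := fun h => by
    rw [← sub_eq_zero.mp h, norm_one] at hx2
    exact lt_irrefl _ hx2
  have h := (((hasSum_coe_mul_geometric_of_norm_lt_one hx2).mul_left 2).add
    (hasSum_geometric_of_norm_lt_one hx2)).mul_left x
  rw [show x * (1 + x ^ 2) / (1 - x ^ 2) ^ 2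
      = x * (2 * (x ^ 2 / (1 - x ^ 2) ^ 2) + (1 - x ^ 2)⁻¹) by field_simp; ring]
  exact h.congr_fun fun n => by ring

theorem cosh_div_two_mul_sinh_sq_eq {s : ℝ} (hs : s ≠ 0) :
    cosh s / (2 * sinh s ^ 2) = exp (-s) * (1 + exp (-s) ^ 2) / (1 - exp (-s) ^ 2) ^ 2 := by
  have h1 : 1 - exp s ^ 2 ≠ 0 := by
    rw [← exp_nat_mul, sub_ne_zero, ne_comm, Ne, exp_eq_one_iff]; push_cast; simpa using hs
  rw [cosh_eq, sinh_eq, exp_neg]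
  field_simp

theorem hasSum_odd_mul_exp_neg {s : ℝ} (hs : 0 < s) :
    HasSum (fun n : ℕ => (2 * (n : ℝ) + 1) * exp (-(2 * (n : ℝ) + 1) * s))
      (cosh s / (2 * sinh s ^ 2)) := by
  have hx : ‖exp (-s)‖ < 1 := by rw [norm_of_nonneg (exp_pos _).le, exp_lt_one_iff]; linarith
  rw [cosh_div_two_mul_sinh_sq_eq hs.ne']
  refine (hasSum_odd_mul_pow_odd hx).congr_fun fun n => ?_
  rw [← exp_nat_mul]; push_cast; ring_nf

theorem abs_cosh_sub_le_and_abs_sinh_sub_le {s : ℝ} (hs : |s| ≤ 1) :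
    |cosh s - (1 + s ^ 2 / 2)| ≤ 5 * s ^ 4 / 96 ∧ |sinh s - (s + s ^ 3 / 6)| ≤ 5 * s ^ 4 / 96 := by
  have hpos := exp_bound hs (n := 4) (by norm_num)
  have hneg := exp_bound (x := -s) (by rwa [abs_neg]) (n := 4) (by norm_num)
  have h4 : |s| ^ 4 = s ^ 4 := by rw [pow_abs]; exact abs_of_nonneg (by positivity)
  simp only [sum_range_succ, sum_range_zero, abs_neg, h4, Nat.factorial] at hpos hneg
  norm_num at hpos hneg
  rw [abs_le] at hpos hneg
  rw [abs_le, abs_le, cosh_eq, sinh_eq]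
  refine ⟨⟨?_, ?_⟩, ?_, ?_⟩ <;> nlinarith

theorem abs_sq_mul_cosh_sub_sinh_sq_le {s : ℝ} (h0 : 0 ≤ s) (h1 : s ≤ 1) :
    |s ^ 2 * cosh s - sinh s ^ 2| ≤ s ^ 4 := by
  obtain ⟨hc, hs⟩ := abs_cosh_sub_le_and_abs_sinh_sub_le (abs_le.mpr ⟨by linarith, h1⟩)
  rw [abs_le] at hc hs ⊢
  have hsinh : s ≤ sinh s := self_le_sinh_iff.mpr h0
  have h2 : s ^ 2 ≤ 1 := pow_le_one₀ h0 h1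
  have h4 : s ^ 4 ≤ 1 := pow_le_one₀ h0 h1
  constructor <;> nlinarith [sq_nonneg s, sq_nonneg (s ^ 2), sq_nonneg (s - s ^ 2)]

theorem abs_cosh_div_two_mul_sinh_sq_sub_le_half {s : ℝ} (h0 : 0 < s) (h1 : s ≤ 1) :
    |cosh s / (2 * sinh s ^ 2) - 1 / (2 * s ^ 2)| ≤ 1 / 2 := by
  have hsinh : s ≤ sinh s := self_le_sinh_iff.mpr h0.le
  have hsinh0 : 0 < sinh s := sinh_pos_iff.mpr h0
  have hden : 0 < 2 * s ^ 2 * sinh s ^ 2 := by positivity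
  have heq : cosh s / (2 * sinh s ^ 2) - 1 / (2 * s ^ 2)
      = (s ^ 2 * cosh s - sinh s ^ 2) / (2 * s ^ 2 * sinh s ^ 2) := by
    field_simp
  have : s ^ 2 ≤ sinh s ^ 2 := pow_le_pow_left₀ h0.le hsinh 2
  rw [heq, abs_div, abs_of_pos hden, div_le_iff₀ hden]
  nlinarith [abs_sq_mul_cosh_sub_sinh_sq_le h0.le h1]

theorem cosh_div_two_mul_sinh_sq_le {s : ℝ} (h1 : 1 ≤ s) :
    cosh s / (2 * sinh s ^ 2) ≤ 4 * exp (-s) := by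
  have hE : 2 ≤ exp s := by linarith [add_one_le_exp s]
  have hinv : exp (-s) * exp s = 1 := by rw [← exp_add, neg_add_cancel, exp_zero]
  have hsinh0 : 0 < sinh s := sinh_pos_iff.mpr (by linarith)
  have := exp_pos (-s)
  rw [div_le_iff₀ (by positivity), cosh_eq, sinh_eq]
  nlinarith [mul_pos this this]

theorem abs_cosh_div_two_mul_sinh_sq_sub_le {s : ℝ} (hs : 0 < s) :
    |cosh s / (2 * sinh s ^ 2) - 1 / (2 * s ^ 2)| ≤ 8 / (1 + s) ^ 2 := by
  rcases le_total s 1 with h1 | h1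
  · refine (abs_cosh_div_two_mul_sinh_sq_sub_le_half hs h1).trans ?_
    rw [div_le_div_iff₀ (by norm_num) (by positivity)]
    nlinarith
  · have hg : 0 ≤ cosh s / (2 * sinh s ^ 2) := by
      have := sinh_pos_iff.mpr hs; have := cosh_pos s; positivity
    have hg' : cosh s / (2 * sinh s ^ 2) ≤ 8 / (1 + s) ^ 2 := by
      refine (cosh_div_two_mul_sinh_sq_le h1).trans ?_
      rw [exp_neg, ← div_eq_mul_inv, div_le_div_iff₀ (exp_pos s) (by positivity)]
      nlinarith [quadratic_le_exp_of_nonneg hs.le]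
    have hm : 1 / (2 * s ^ 2) ≤ 8 / (1 + s) ^ 2 := by
      rw [div_le_div_iff₀ (by positivity) (by positivity)]
      nlinarith
    have hm0 : 0 ≤ 1 / (2 * s ^ 2) := by positivity
    rw [abs_le]
    constructor <;> linarith

theorem hasSum_inv_succ_sq : HasSum (fun k : ℕ => 1 / ((k : ℝ) + 1) ^ 2) (π ^ 2 / 6) := by
  have h := (hasSum_nat_add_iff' 1).mpr hasSum_zeta_two
  simp only [sum_range_one, Nat.cast_zero, zero_pow two_ne_zero, div_zero, sub_zero,
    Nat.cast_add, Nat.cast_one] at h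
  exact h

theorem hasSum_alternating_inv_succ_sq :
    HasSum (fun k : ℕ => (-1) ^ k / ((k : ℝ) + 1) ^ 2) (π ^ 2 / 12) := by
  -- `1 - (-1)^k` kills the even terms; the odd ones are `2 / (2j+2)^2 = (1/2) / (j+1)^2`.
  have hodd : HasSum (fun k : ℕ => (1 - (-1) ^ k) / ((k : ℝ) + 1) ^ 2) (π ^ 2 / 12) := by
    rw [show π ^ 2 / 12 = 0 + 1 / 2 * (π ^ 2 / 6) by ring]
    refine HasSum.even_add_odd (hasSum_zero.congr_fun fun k => by simp [pow_mul]) ?_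
    refine (hasSum_inv_succ_sq.mul_left (1 / 2)).congr_fun fun k => ?_
    simp only [pow_succ, pow_mul]; push_cast; field_simp; ring
  rw [show π ^ 2 / 12 = π ^ 2 / 6 - π ^ 2 / 12 by ring]
  exact (hasSum_inv_succ_sq.sub hodd).congr_fun fun k => by ring

theorem sum_range_inv_one_add_mul_sq_le {ρ : ℝ} (hρ : 0 < ρ) (n : ℕ) :
    ∑ k ∈ range n, 1 / (1 + (k + 1) * ρ) ^ 2 ≤ 1 / ρ := by
  set u : ℕ → ℝ := fun k => 1 / ρ * (1 / (1 + k * ρ))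
  have hterm : ∀ k : ℕ, 1 / (1 + (k + 1) * ρ) ^ 2 ≤ u k - u (k + 1) := fun k => by
    have h1 : 0 < 1 + k * ρ := by positivity
    have h2 : 0 < 1 + (k + 1) * ρ := by positivity
    have hu : u k - u (k + 1) = 1 / ((1 + k * ρ) * (1 + (k + 1) * ρ)) := by
      simp only [u]; push_cast; field_simp; ring
    rw [hu, sq]
    exact one_div_le_one_div_of_le (by positivity) (by nlinarith)
  calc ∑ k ∈ range n, 1 / (1 + (k + 1) * ρ) ^ 2 ≤ ∑ k ∈ range n, (u k - u (k + 1)) :=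
        sum_le_sum fun k _ => hterm k
    _ = u 0 - u n := sum_range_sub' u n
    _ ≤ 1 / ρ := by simp only [u]; norm_num; positivity

theorem abs_tsum_sub_le_of_abs_sub_le {a m b : ℕ → ℝ} {M C : ℝ} (hm : HasSum m M)
    (hab : ∀ k, |a k - m k| ≤ b k) (hb : ∀ n, ∑ k ∈ range n, b k ≤ C) :
    |∑' k, a k - M| ≤ C := by
  have hb0 : ∀ k, 0 ≤ b k := fun k => (abs_nonneg _).trans (hab k)
  have hbs : Summable b := summable_of_sum_range_le hb0 hb
  have hd : Summable fun k => ‖a k - m k‖ := hbs.of_nonneg_of_le (fun _ => norm_nonneg _) hab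
  have ha : ∑' k, a k = ∑' k, (a k - m k) + M := by
    rw [← hm.tsum_eq, ← (hd.of_norm).tsum_add hm.summable]
    simp only [sub_add_cancel]
  calc |∑' k, a k - M| = ‖∑' k, (a k - m k)‖ := by rw [ha, add_sub_cancel_right, norm_eq_abs]
    _ ≤ ∑' k, ‖a k - m k‖ := norm_tsum_le_tsum_norm hd
    _ ≤ ∑' k, b k := hd.tsum_le_tsum hab hbs
    _ ≤ C := tsum_le_of_sum_range_le hb0 hb

/-- The mean `m_Q(t) = ∑_{n≥1} (2n-1) t^{2n-1}/(1+t^{2n-1})` with `t = e^{-ρ}` equals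
`π²/(24ρ²) + O(1/ρ)` as `ρ → 0⁺`. -/
theorem stmt_7 :
    ∃ C > (0:ℝ), ∃ ρ₀ > (0:ℝ), ∀ ρ : ℝ, 0 < ρ → ρ < ρ₀ →
      |(∑' n : ℕ, (2 * (n:ℝ) + 1) * Real.exp (-(2 * (n:ℝ) + 1) * ρ) /
          (1 + Real.exp (-(2 * (n:ℝ) + 1) * ρ))) - π^2 / (24 * ρ^2)| ≤ C / ρ := by
  refine ⟨8, by norm_num, 1, one_pos, fun ρ hρ _ => ?_⟩
  have hx : ∀ n : ℕ, |exp (-(2 * (n : ℝ) + 1) * ρ)| ≤ exp (-ρ) := fun n => by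
    rw [abs_of_pos (exp_pos _), exp_le_exp]
    nlinarith [n.cast_nonneg (α := ℝ)]
  have hcol : ∀ k : ℕ, ∑' n : ℕ, (2 * (n : ℝ) + 1) * exp (-(2 * (n : ℝ) + 1) * ρ) ^ (k + 1)
      = cosh ((k + 1) * ρ) / (2 * sinh ((k + 1) * ρ) ^ 2) := fun k => by
    refine ((hasSum_odd_mul_exp_neg (by positivity)).congr_fun fun n => ?_).tsum_eq
    rw [← exp_nat_mul]; push_cast; ring_nf
  have hmain : HasSum (fun k : ℕ => (-1) ^ k * (1 / (2 * ((k + 1) * ρ) ^ 2)))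
      (π ^ 2 / (24 * ρ ^ 2)) := by
    rw [show π ^ 2 / (24 * ρ ^ 2) = 1 / (2 * ρ ^ 2) * (π ^ 2 / 12) by field_simp; ring]
    exact (hasSum_alternating_inv_succ_sq.mul_left _).congr_fun fun k => by field_simp
  rw [tsum_mul_div_one_add_eq_tsum_alternating (exp_lt_one_iff.mpr (neg_lt_zero.mpr hρ)) hx
    (hasSum_odd_mul_exp_neg hρ).summable]
  simp only [hcol]
  refine abs_tsum_sub_le_of_abs_sub_le (b := fun k => 8 / (1 + (k + 1) * ρ) ^ 2) hmain
    (fun k => ?_) fun n => ?_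
  · rw [← mul_sub, abs_mul, abs_pow, abs_neg, abs_one, one_pow, one_mul]
    exact abs_cosh_div_two_mul_sinh_sq_sub_le (by positivity)
  · calc ∑ k ∈ range n, 8 / (1 + (k + 1) * ρ) ^ 2
        = 8 * ∑ k ∈ range n, 1 / (1 + (k + 1) * ρ) ^ 2 := by simp only [mul_sum, mul_one_div]
      _ ≤ 8 * (1 / ρ) := by gcongr; exact sum_range_inv_one_add_mul_sq_le hρ n
      _ = 8 / ρ := mul_one_div _ _
end

section
/- For 0 < t < 1 with ρ := -log t, the sum ∑_{n≥1} (2n-1)² e^{(2n-1)ρ}/(e^{(2n-1)ρ} + 1)² equals π²/(12 ρ³) + O(1/ρ²) as ρ → 0⁺. -/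
/-!
With `g x = x² eˣ / (eˣ + 1)²`, the sum is `ρ⁻² ∑ g ((2n+1)ρ)`, and `2ρ ∑ g ((2n+1)ρ)` is the
midpoint Riemann sum of `g` over `(0, ∞)` with mesh `2ρ`. On each cell the midpoint rule errs by
at most the mesh times `∫ |g'|` over the cell, so the total error is at most `2ρ ∫₀^∞ |g'| ≤ 8ρ`.
It remains to see `∫₀^∞ g = π²/6`: expanding
`g x = ∑ (-1)ⁿ (n+1) x² e^{-(n+1)x}` and integrating termwise gives `2 ∑ (-1)ⁿ/(n+1)² = π²/6`.
-/

open Real MeasureTheory Set Filter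
open scoped Interval

section MidpointRule

variable {h : ℝ}

theorem iUnion_Ioc_natCast_mul (hh : 0 < h) :
    ⋃ n : ℕ, Ioc (n * h) ((n + 1) * h) = Ioi 0 := by
  ext x
  simp only [mem_iUnion, mem_Ioc, mem_Ioi]
  constructor
  · rintro ⟨n, hn, -⟩
    exact lt_of_le_of_lt (by positivity) hn
  · intro hx
    obtain ⟨n, hn⟩ := Nat.exists_eq_add_of_lt (Nat.ceil_pos.mpr (div_pos hx hh))
    rw [zero_add] at hn
    refine ⟨n, ?_, ?_⟩
    · rw [← lt_div_iff₀ hh, ← Nat.lt_ceil, hn]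
      omega
    · rw [← div_le_iff₀ hh]
      exact_mod_cast hn ▸ Nat.le_ceil (x / h)

theorem pairwise_disjoint_Ioc_natCast_mul (hh : 0 < h) :
    Pairwise (Function.onFun Disjoint fun n : ℕ => Ioc (n * h) ((n + 1) * h)) := by
  refine (pairwise_disjoint_on _).mpr fun m n hmn => Ioc_disjoint_Ioc_of_le ?_
  gcongr
  exact_mod_cast hmn

theorem hasSum_intervalIntegral_of_integrableOn_Ioi {E : Type*} [NormedAddCommGroup E]
    [NormedSpace ℝ E] {f : ℝ → E} (hh : 0 < h) (hf : IntegrableOn f (Ioi 0)) :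
    HasSum (fun n : ℕ => ∫ x in n * h..(n + 1) * h, f x) (∫ x in Ioi 0, f x) := by
  rw [← iUnion_Ioc_natCast_mul hh] at hf ⊢
  refine (hasSum_integral_iUnion (fun _ => measurableSet_Ioc)
    (pairwise_disjoint_Ioc_natCast_mul hh) hf).congr_fun fun n => ?_
  exact intervalIntegral.integral_of_le (by gcongr; linarith)

variable {f f' : ℝ → ℝ} {l r : ℝ}

theorem abs_sub_le_intervalIntegral_abs_deriv (hlr : l ≤ r)
    (hf : ∀ x ∈ Icc l r, HasDerivAt f (f' x) x) (hf' : IntervalIntegrable f' volume l r)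
    {x y : ℝ} (hx : x ∈ Icc l r) (hy : y ∈ Icc l r) :
    |f x - f y| ≤ ∫ t in l..r, |f' t| := by
  have hsub : uIcc y x ⊆ uIcc l r := uIcc_subset_uIcc (uIcc_of_le hlr ▸ Icc_subset_uIcc hy)
    (uIcc_of_le hlr ▸ Icc_subset_uIcc hx)
  rw [← intervalIntegral.integral_eq_sub_of_hasDerivAt
    (fun t ht => hf t (uIcc_of_le hlr ▸ hsub ht)) (hf'.mono_set hsub)]
  calc |∫ t in y..x, f' t| ≤ ∫ t in Ι y x, |f' t| := by
        simpa only [Real.norm_eq_abs] using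
          intervalIntegral.norm_integral_le_integral_norm_uIoc (f := f') (a := y) (b := x)
    _ ≤ ∫ t in Ι l r, |f' t| := by
        refine setIntegral_mono_set ?_ (ae_of_all _ fun t => abs_nonneg (f' t)) ?_
        · exact hf'.def'.norm
        · exact Eventually.of_forall (uIoc_subset_uIoc_of_uIcc_subset_uIcc hsub)
    _ = ∫ t in l..r, |f' t| := by rw [uIoc_of_le hlr, intervalIntegral.integral_of_le hlr]

theorem abs_intervalIntegral_sub_mul_le (hf : ∀ x ∈ Icc l r, HasDerivAt f (f' x) x)
    (hf' : IntervalIntegrable f' volume l r) {m : ℝ} (hm : m ∈ Icc l r) :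
    |(∫ x in l..r, f x) - (r - l) * f m| ≤ (r - l) * ∫ t in l..r, |f' t| := by
  have hlr : l ≤ r := hm.1.trans hm.2
  have hcont : ContinuousOn f (uIcc l r) := uIcc_of_le hlr ▸ HasDerivAt.continuousOn hf
  calc |(∫ x in l..r, f x) - (r - l) * f m| = |∫ x in l..r, (f x - f m)| := by
        rw [intervalIntegral.integral_sub hcont.intervalIntegrable intervalIntegrable_const,
          intervalIntegral.integral_const, smul_eq_mul]
    _ ≤ ∫ x in l..r, |f x - f m| := intervalIntegral.abs_integral_le_integral_abs hlr
    _ ≤ ∫ _ in l..r, ∫ t in l..r, |f' t| := by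
        refine intervalIntegral.integral_mono_on hlr
          ((hcont.sub continuousOn_const).abs.intervalIntegrable) intervalIntegrable_const
          fun x hx => abs_sub_le_intervalIntegral_abs_deriv hlr hf hf' hx hm
    _ = (r - l) * ∫ t in l..r, |f' t| := by rw [intervalIntegral.integral_const, smul_eq_mul]

theorem abs_mul_tsum_midpoint_sub_integral_Ioi_le {h : ℝ} (hh : 0 < h)
    (hf : ∀ x ∈ Ici 0, HasDerivAt f (f' x) x) (hfi : IntegrableOn f (Ioi 0))
    (hf'i : IntegrableOn f' (Ioi 0)) :
    |h * ∑' n : ℕ, f ((n + 1 / 2) * h) - ∫ x in Ioi 0, f x| ≤ h * ∫ x in Ioi 0, |f' x| := by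
  have hI := hasSum_intervalIntegral_of_integrableOn_Ioi hh hfi
  have hJ := hasSum_intervalIntegral_of_integrableOn_Ioi hh hf'i.abs
  have herr (n : ℕ) : ‖h * f ((n + 1 / 2) * h) - ∫ x in n * h..(n + 1) * h, f x‖ ≤
      h * ∫ x in n * h..(n + 1) * h, |f' x| := by
    have hn : (0 : ℝ) ≤ n * h := by positivity
    have hle : (n : ℝ) * h ≤ (n + 1) * h := by gcongr; linarith
    have hf'n : IntervalIntegrable f' volume (n * h) ((n + 1) * h) :=
      (intervalIntegrable_iff_integrableOn_Ioc_of_le hle).mpr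
        (hf'i.mono_set (Ioc_subset_Ioi_self.trans (Ioi_subset_Ioi hn)))
    have hm : ((n : ℝ) + 1 / 2) * h ∈ Icc (n * h) ((n + 1) * h) :=
      ⟨by gcongr; linarith, by gcongr; linarith⟩
    have := abs_intervalIntegral_sub_mul_le (fun x hx => hf x (hn.trans hx.1)) hf'n hm
    rwa [show ((n : ℝ) + 1) * h - n * h = h by ring, abs_sub_comm] at this
  have hsum := ((Summable.of_norm_bounded (hJ.summable.mul_left h) herr).hasSum.add hI)
  simp only [sub_add_cancel] at hsum
  rw [← tsum_mul_left, hsum.tsum_eq, add_sub_cancel_right]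
  exact tsum_of_norm_bounded (hJ.mul_left h) herr

end MidpointRule

theorem integrableOn_pow_mul_exp_neg_mul_Ioi (n : ℕ) {c : ℝ} (hc : 0 < c) :
    IntegrableOn (fun x : ℝ => x ^ n * exp (-(c * x))) (Ioi 0) := by
  simpa [Real.rpow_natCast] using
    integrableOn_rpow_mul_exp_neg_mul_rpow (s := n) (by linarith [n.cast_nonneg (α := ℝ)])
      zero_lt_one hc

theorem integral_pow_mul_exp_neg_mul_Ioi (n : ℕ) {c : ℝ} (hc : 0 < c) :
    ∫ x in Ioi 0, x ^ n * exp (-(c * x)) = n.factorial / c ^ (n + 1) := by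
  have h := integral_rpow_mul_exp_neg_mul_Ioi (a := n + 1) (by positivity) hc
  simp only [add_sub_cancel_right, Real.rpow_natCast] at h
  rw [h, Real.Gamma_nat_eq_factorial, ← Nat.cast_add_one, Real.rpow_natCast, one_div, inv_pow,
    inv_mul_eq_div]

theorem hasSum_neg_one_pow_div_succ_sq :
    HasSum (fun n : ℕ => (-1) ^ n / ((n : ℝ) + 1) ^ 2) (π ^ 2 / 12) := by
  have h := hasSum_one_div_nat_pow_mul_cos one_ne_zero (x := 1 / 2) ⟨by norm_num, by norm_num⟩
  rw [← hasSum_nat_add_iff' 1] at h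
  have hterm (n : ℕ) : (-1) ^ n / ((n : ℝ) + 1) ^ 2 =
      -(1 / ((n + 1 : ℕ) : ℝ) ^ (2 * 1) * cos (2 * π * (n + 1 : ℕ) * (1 / 2))) := by
    rw [show 2 * π * ((n + 1 : ℕ) : ℝ) * (1 / 2) = (n + 1 : ℕ) * π by ring, Real.cos_nat_mul_pi]
    push_cast
    ring
  simp_rw [hterm]
  convert h.neg using 1
  · rfl
  · change _ = -(_ * bernoulliFun 2 (1 / 2) - _)
    norm_num [bernoulliFun_two]
    ring

-- `x² p (1 - p)` with `p = (1 + eˣ)⁻¹`: the variance of `x` times a Bernoulli(`p`) variable.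
noncomputable def bernoulliVariance (x : ℝ) : ℝ := x ^ 2 * exp x / (exp x + 1) ^ 2

noncomputable def bernoulliVarianceDeriv (x : ℝ) : ℝ :=
  exp x * (2 * x * (exp x + 1) + x ^ 2 * (1 - exp x)) / (exp x + 1) ^ 3

theorem hasDerivAt_bernoulliVariance (x : ℝ) :
    HasDerivAt bernoulliVariance (bernoulliVarianceDeriv x) x := by
  have hE : exp x + 1 ≠ 0 := by positivity
  refine (((hasDerivAt_pow 2 x).fun_mul (hasDerivAt_exp x)).div
    (((hasDerivAt_exp x).add_const 1).fun_pow 2) (pow_ne_zero 2 hE)).congr_deriv ?_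
  rw [bernoulliVarianceDeriv]
  field_simp
  ring

theorem continuous_bernoulliVariance : Continuous bernoulliVariance := by
  unfold bernoulliVariance
  fun_prop (disch := intro x; positivity)

theorem continuous_bernoulliVarianceDeriv : Continuous bernoulliVarianceDeriv := by
  unfold bernoulliVarianceDeriv
  fun_prop (disch := intro x; positivity)

theorem exp_div_exp_add_one_sq_le (x : ℝ) : exp x / (exp x + 1) ^ 2 ≤ exp (-x) := by
  rw [div_le_iff₀ (by positivity), exp_neg, ← div_eq_inv_mul, le_div_iff₀ (exp_pos x)]
  nlinarith [exp_pos x]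

theorem abs_bernoulliVariance_le (x : ℝ) : |bernoulliVariance x| ≤ x ^ 2 * exp (-x) := by
  rw [bernoulliVariance, abs_of_nonneg (by positivity), mul_div_assoc]
  exact mul_le_mul_of_nonneg_left (exp_div_exp_add_one_sq_le x) (sq_nonneg x)

theorem abs_bernoulliVarianceDeriv_le {x : ℝ} (hx : 0 ≤ x) :
    |bernoulliVarianceDeriv x| ≤ (2 * x + x ^ 2) * exp (-x) := by
  have hE : 1 ≤ exp x := one_le_exp hx
  have hnum : |2 * x * (exp x + 1) + x ^ 2 * (1 - exp x)| ≤ (2 * x + x ^ 2) * (exp x + 1) := by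
    rw [abs_le]
    constructor <;> nlinarith [sq_nonneg x]
  calc |bernoulliVarianceDeriv x|
      = exp x / (exp x + 1) ^ 2 * (|2 * x * (exp x + 1) + x ^ 2 * (1 - exp x)| / (exp x + 1)) := by
        rw [bernoulliVarianceDeriv, abs_div, abs_mul, abs_of_pos (exp_pos x),
          abs_of_pos (by positivity : (0 : ℝ) < (exp x + 1) ^ 3)]
        field_simp
    _ ≤ exp (-x) * (2 * x + x ^ 2) := by
        gcongr
        · exact exp_div_exp_add_one_sq_le x
        · rw [div_le_iff₀ (by positivity)]; exact hnum
    _ = (2 * x + x ^ 2) * exp (-x) := mul_comm _ _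

theorem integrableOn_bernoulliVariance : IntegrableOn bernoulliVariance (Ioi 0) := by
  refine (integrableOn_pow_mul_exp_neg_mul_Ioi 2 one_pos).mono'
    continuous_bernoulliVariance.aestronglyMeasurable (ae_of_all _ fun x => ?_)
  simpa only [one_mul, Real.norm_eq_abs] using abs_bernoulliVariance_le x

theorem integrableOn_two_mul_add_sq_mul_exp_neg_Ioi :
    IntegrableOn (fun x => (2 * x + x ^ 2) * exp (-x)) (Ioi 0) := by
  refine IntegrableOn.congr_fun (((integrableOn_pow_mul_exp_neg_mul_Ioi 1 one_pos).const_mul 2).add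
    (integrableOn_pow_mul_exp_neg_mul_Ioi 2 one_pos)) (fun x _ => ?_) measurableSet_Ioi
  simp only [Pi.add_apply, one_mul, pow_one]
  ring

theorem integrableOn_bernoulliVarianceDeriv : IntegrableOn bernoulliVarianceDeriv (Ioi 0) := by
  refine integrableOn_two_mul_add_sq_mul_exp_neg_Ioi.mono'
    continuous_bernoulliVarianceDeriv.aestronglyMeasurable ?_
  filter_upwards [ae_restrict_mem measurableSet_Ioi] with x hx
  exact abs_bernoulliVarianceDeriv_le (le_of_lt hx)

theorem integral_abs_bernoulliVarianceDeriv_le :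
    ∫ x in Ioi 0, |bernoulliVarianceDeriv x| ≤ 4 := calc
  ∫ x in Ioi 0, |bernoulliVarianceDeriv x| ≤ ∫ x in Ioi 0, (2 * x + x ^ 2) * exp (-x) :=
    setIntegral_mono_on integrableOn_bernoulliVarianceDeriv.abs
      integrableOn_two_mul_add_sq_mul_exp_neg_Ioi measurableSet_Ioi
      fun x hx => abs_bernoulliVarianceDeriv_le (le_of_lt hx)
  _ = 2 * (∫ x in Ioi 0, x ^ 1 * exp (-(1 * x))) + ∫ x in Ioi 0, x ^ 2 * exp (-(1 * x)) := by
    rw [← integral_const_mul, ← integral_add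
      ((integrableOn_pow_mul_exp_neg_mul_Ioi 1 one_pos).const_mul 2)
      (integrableOn_pow_mul_exp_neg_mul_Ioi 2 one_pos)]
    congr 1 with x
    simp only [one_mul, pow_one]
    ring
  _ = 4 := by
    rw [integral_pow_mul_exp_neg_mul_Ioi 1 one_pos, integral_pow_mul_exp_neg_mul_Ioi 2 one_pos]
    norm_num [Nat.factorial]

theorem hasSum_bernoulliVariance {x : ℝ} (hx : 0 < x) :
    HasSum (fun n : ℕ => (-1) ^ n * ((n : ℝ) + 1) * (x ^ 2 * exp (-((n + 1) * x))))
      (bernoulliVariance x) := by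
  have hy : ‖-exp (-x)‖ < 1 := by
    rw [norm_neg, Real.norm_eq_abs, abs_of_pos (exp_pos _), Real.exp_lt_one_iff, neg_lt_zero]
    exact hx
  have h := (hasSum_nat_add_iff' (f := fun n : ℕ => (n : ℝ) * (-exp (-x)) ^ n) 1).mpr
    (hasSum_coe_mul_geometric_of_norm_lt_one hy)
  simp only [Finset.range_one, Finset.sum_singleton, CharP.cast_eq_zero, zero_mul, sub_zero] at h
  have hterm : (fun n : ℕ => (-1) ^ n * ((n : ℝ) + 1) * (x ^ 2 * exp (-((n + 1) * x)))) =
      fun n : ℕ => -x ^ 2 * (((n + 1 : ℕ) : ℝ) * (-exp (-x)) ^ (n + 1)) := by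
    ext n
    rw [neg_pow (exp (-x)), ← exp_nat_mul]
    push_cast
    ring_nf
  have hval : bernoulliVariance x = -x ^ 2 * (-exp (-x) / (1 - -exp (-x)) ^ 2) := by
    have hE : exp x + 1 ≠ 0 := by positivity
    rw [bernoulliVariance, exp_neg, sub_neg_eq_add]
    field_simp
  rw [hterm, hval]
  exact h.mul_left _

theorem integral_bernoulliVariance : ∫ x in Ioi 0, bernoulliVariance x = π ^ 2 / 6 := by
  set F : ℕ → ℝ → ℝ := fun n x => (-1) ^ n * ((n : ℝ) + 1) * (x ^ 2 * exp (-((n + 1) * x)))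
  have hc (n : ℕ) : (0 : ℝ) < n + 1 := by positivity
  have hmoment (n : ℕ) : ∫ x in Ioi 0, x ^ 2 * exp (-((n + 1) * x)) = 2 / ((n : ℝ) + 1) ^ 3 := by
    rw [integral_pow_mul_exp_neg_mul_Ioi 2 (hc n)]
    norm_num [Nat.factorial]
  have hFi (n : ℕ) : Integrable (F n) (volume.restrict (Ioi 0)) :=
    (integrableOn_pow_mul_exp_neg_mul_Ioi 2 (hc n)).const_mul _
  have hFnorm (n : ℕ) : ∫ x in Ioi 0, ‖F n x‖ = 2 / ((n : ℝ) + 1) ^ 2 := by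
    have (x : ℝ) : ‖F n x‖ = ((n : ℝ) + 1) * (x ^ 2 * exp (-((n + 1) * x))) := by
      rw [Real.norm_eq_abs, abs_mul, abs_mul, abs_pow, abs_neg, abs_one, one_pow, one_mul,
        abs_of_pos (hc n), abs_of_nonneg (by positivity)]
    simp_rw [this]
    rw [integral_const_mul, hmoment]
    field_simp
  have hFint (n : ℕ) : ∫ x in Ioi 0, F n x = 2 * ((-1) ^ n / ((n : ℝ) + 1) ^ 2) := by
    rw [integral_const_mul, hmoment]
    field_simp
  have hsum : Summable fun n => ∫ x in Ioi 0, ‖F n x‖ := by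
    simp_rw [hFnorm]
    refine (((summable_nat_add_iff 1).mpr
      (Real.summable_one_div_nat_pow.mpr one_lt_two)).mul_left 2).congr fun n => ?_
    push_cast
    ring
  have key := hasSum_integral_of_summable_integral_norm hFi hsum
  simp_rw [hFint] at key
  rw [setIntegral_congr_fun measurableSet_Ioi fun x hx => (hasSum_bernoulliVariance hx).tsum_eq.symm,
    key.unique (hasSum_neg_one_pow_div_succ_sq.mul_left 2)]
  ring

/-- The variance `σ²_Q(t) = ∑_{n≥1} (2n-1)² e^{(2n-1)ρ}/(e^{(2n-1)ρ}+1)²` with `t = e^{-ρ}`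
equals `π²/(12ρ³) + O(1/ρ²)` as `ρ → 0⁺`. -/
theorem stmt_8 :
    ∃ C > (0:ℝ), ∃ ρ₀ > (0:ℝ), ∀ ρ : ℝ, 0 < ρ → ρ < ρ₀ →
      |(∑' n : ℕ, (2 * (n:ℝ) + 1)^2 * Real.exp ((2 * (n:ℝ) + 1) * ρ) /
          (Real.exp ((2 * (n:ℝ) + 1) * ρ) + 1)^2) - π^2 / (12 * ρ^3)| ≤ C / ρ^2 := by
  refine ⟨4, by norm_num, 1, one_pos, fun ρ hρ _ => ?_⟩
  have hmid := abs_mul_tsum_midpoint_sub_integral_Ioi_le (by positivity : 0 < 2 * ρ)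
    (fun x _ => hasDerivAt_bernoulliVariance x) integrableOn_bernoulliVariance
    integrableOn_bernoulliVarianceDeriv
  rw [integral_bernoulliVariance] at hmid
  set S := ∑' n : ℕ, bernoulliVariance ((n + 1 / 2) * (2 * ρ))
  have hS : |2 * ρ * S - π ^ 2 / 6| ≤ 8 * ρ := hmid.trans <| by
    linarith [mul_le_mul_of_nonneg_left integral_abs_bernoulliVarianceDeriv_le hρ.le]
  have hsum : (∑' n : ℕ, (2 * (n:ℝ) + 1)^2 * Real.exp ((2 * (n:ℝ) + 1) * ρ) /
      (Real.exp ((2 * (n:ℝ) + 1) * ρ) + 1)^2) = S / ρ ^ 2 := by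
    rw [← tsum_div_const]
    congr 1 with n
    rw [bernoulliVariance, show ((n : ℝ) + 1 / 2) * (2 * ρ) = (2 * n + 1) * ρ by ring]
    field_simp
  have hρ3 : 0 < 2 * ρ ^ 3 := by positivity
  rw [hsum]
  calc |S / ρ ^ 2 - π ^ 2 / (12 * ρ ^ 3)| = |2 * ρ * S - π ^ 2 / 6| / (2 * ρ ^ 3) := by
        rw [← abs_of_pos hρ3, ← abs_div]
        congr 1
        field_simp
        ring
    _ ≤ 8 * ρ / (2 * ρ ^ 3) := by gcongr
    _ = 4 / ρ ^ 2 := by field_simp; ring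
end

section
/- As λ → 0⁺, log ∏_{n≥1}(1 + e^{-(2n-1)λ}) = π²/(24λ) + O(λ). -/
/-!
Write `L μ = -∑_{n ≥ 0} log (1 - e^{-(2n+1)μ})`. Since `1 + t = (1 - t²) / (1 - t)`, the logarithm
of the product is `L λ - L (2λ)`. Expanding each logarithm and summing the geometric series over
`n` first gives `L μ = ∑_{k ≥ 1} 1 / (2k sinh (kμ))`, and comparing with `ζ(2) = π²/6` term by
term, `L μ = π²/(12μ) - μ ∑_{k ≥ 1} φ(kμ)` with `φ x = 1/(2x²) - 1/(2x sinh x)` (`sinhDefect`).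
Since `L (2λ)` involves exactly the even-indexed values `φ(2kλ)`, with weight `2λ`,
`log ∏ - π²/(24λ) = -λ ∑_{k ≥ 1} (-1)^{k+1} φ(kλ)`. Comparing power series coefficients shows that
`φ` is decreasing with `φ ≤ 1/12`, so this alternating series lies between `0` and
`λ φ(λ) ≤ λ/12`.
-/

open Real

theorem mul_sinh_add_sq_mul_cosh_le_two_mul_sinh_sq {x : ℝ} (hx : 0 ≤ x) :
    x * sinh x + x ^ 2 * cosh x ≤ 2 * sinh x ^ 2 := by
  have hL := ((hasSum_sinh x).mul_left x).add ((hasSum_cosh x).mul_left (x ^ 2))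
  have hR : HasSum (fun m : ℕ => (2 * x) ^ (2 * (m + 1)) / (2 * (m + 1)).factorial)
      (2 * sinh x ^ 2) := by
    rw [show 2 * sinh x ^ 2 = cosh (2 * x) - 1 by rw [cosh_two_mul, cosh_sq]; ring]
    simpa using (hasSum_nat_add_iff' 1).mpr (hasSum_cosh (2 * x))
  refine hasSum_le (fun m => ?_) hL hR
  have hfac : ((2 * (m + 1)).factorial : ℝ) = (2 * m + 2) * (2 * m + 1) * (2 * m).factorial := by
    rw [show 2 * (m + 1) = 2 * m + 1 + 1 by ring, Nat.factorial_succ, Nat.factorial_succ]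
    push_cast; ring
  have hsq : (2 * (m : ℝ) + 2) ^ 2 ≤ 4 ^ (m + 1) := by
    have : (m : ℝ) + 1 ≤ 2 ^ m := by exact_mod_cast m.lt_two_pow_self
    calc (2 * (m : ℝ) + 2) ^ 2 = 4 * ((m : ℝ) + 1) ^ 2 := by ring
      _ ≤ 4 * (2 ^ m) ^ 2 := by gcongr
      _ = 4 ^ (m + 1) := by rw [← pow_mul, mul_comm m, pow_mul]; ring
  calc x * (x ^ (2 * m + 1) / (2 * m + 1).factorial) + x ^ 2 * (x ^ (2 * m) / (2 * m).factorial)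
      = x ^ (2 * m + 2) * (2 * m + 2) ^ 2 / (2 * (m + 1)).factorial := by
        rw [hfac, Nat.factorial_succ]; push_cast; field_simp; ring
    _ ≤ x ^ (2 * m + 2) * 4 ^ (m + 1) / (2 * (m + 1)).factorial := by gcongr
    _ = (2 * x) ^ (2 * (m + 1)) / (2 * (m + 1)).factorial := by
        rw [mul_pow, pow_mul]; ring

theorem six_mul_sinh_sub_le_sq_mul_sinh {x : ℝ} (hx : 0 ≤ x) :
    6 * sinh x - 6 * x ≤ x ^ 2 * sinh x := by
  have hL : HasSum (fun m : ℕ => 6 * (x ^ (2 * (m + 1) + 1) / (2 * (m + 1) + 1).factorial))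
      (6 * sinh x - 6 * x) := by
    simpa using (hasSum_nat_add_iff' 1).mpr ((hasSum_sinh x).mul_left 6)
  refine hasSum_le (fun m => ?_) hL ((hasSum_sinh x).mul_left (x ^ 2))
  have hfac : ((2 * (m + 1) + 1).factorial : ℝ)
      = (2 * m + 3) * (2 * m + 2) * (2 * m + 1).factorial := by
    rw [show 2 * (m + 1) + 1 = 2 * m + 1 + 1 + 1 by ring, Nat.factorial_succ, Nat.factorial_succ]
    push_cast; ring
  calc 6 * (x ^ (2 * (m + 1) + 1) / (2 * (m + 1) + 1).factorial)
      = x ^ 2 * (x ^ (2 * m + 1) / (2 * m + 1).factorial) * (6 / ((2 * m + 3) * (2 * m + 2))) := by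
        rw [hfac]; field_simp; ring
    _ ≤ x ^ 2 * (x ^ (2 * m + 1) / (2 * m + 1).factorial) * 1 := by
        gcongr; rw [div_le_one (by positivity)]; nlinarith [(m.cast_nonneg : (0 : ℝ) ≤ m)]
    _ = x ^ 2 * (x ^ (2 * m + 1) / (2 * m + 1).factorial) := mul_one _

noncomputable def sinhDefect (x : ℝ) : ℝ := (2 * x ^ 2)⁻¹ - (2 * x * sinh x)⁻¹

theorem sinhDefect_le_one_div_twelve {x : ℝ} (hx : 0 < x) : sinhDefect x ≤ 1 / 12 := by
  have hs : 0 < sinh x := sinh_pos_iff.mpr hx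
  have h := six_mul_sinh_sub_le_sq_mul_sinh hx.le
  rw [sinhDefect, ← one_div, ← one_div, div_sub_div _ _ (by positivity) (by positivity),
    div_le_div_iff₀ (by positivity) (by norm_num)]
  nlinarith

theorem hasDerivAt_sinhDefect {x : ℝ} (hx : 0 < x) :
    HasDerivAt sinhDefect
      ((x * sinh x + x ^ 2 * cosh x - 2 * sinh x ^ 2) / (2 * x ^ 3 * sinh x ^ 2)) x := by
  have hs : 0 < sinh x := sinh_pos_iff.mpr hx
  have hsq : HasDerivAt (fun y => 2 * y ^ 2) (4 * x) x :=
    ((hasDerivAt_pow 2 x).const_mul 2).congr_deriv (by ring)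
  have hsinh : HasDerivAt (fun y => 2 * y * sinh y) (2 * sinh x + 2 * x * cosh x) x :=
    (((hasDerivAt_id x).const_mul 2).mul (hasDerivAt_sinh x)).congr_deriv (by simp)
  refine ((hsq.inv (by positivity)).sub (hsinh.inv (by positivity))).congr_deriv ?_
  field_simp
  ring

theorem antitoneOn_sinhDefect : AntitoneOn sinhDefect (Set.Ioi 0) := by
  refine antitoneOn_of_hasDerivWithinAt_nonpos (convex_Ioi 0)
    (f' := fun x => (x * sinh x + x ^ 2 * cosh x - 2 * sinh x ^ 2) / (2 * x ^ 3 * sinh x ^ 2))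
    (fun x hx => (hasDerivAt_sinhDefect hx).continuousAt.continuousWithinAt)
    (fun x hx => ?_) (fun x hx => ?_)
  all_goals rw [interior_Ioi, Set.mem_Ioi] at hx
  · exact (hasDerivAt_sinhDefect hx).hasDerivWithinAt
  · exact div_nonpos_of_nonpos_of_nonneg
      (by linarith [mul_sinh_add_sq_mul_cosh_le_two_mul_sinh_sq hx.le]) (by positivity)

theorem hasSum_exp_neg_pow_two_mul_add_one {c : ℝ} (hc : 0 < c) :
    HasSum (fun n : ℕ => exp (-c) ^ (2 * n + 1)) (2 * sinh c)⁻¹ := by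
  have hr : exp (-c) < 1 := exp_lt_one_iff.mpr (by linarith)
  have hr2 : exp (-c) ^ 2 < 1 := pow_lt_one₀ (exp_pos _).le hr two_ne_zero
  have hval : (2 * sinh c)⁻¹ = exp (-c) * (1 - exp (-c) ^ 2)⁻¹ := by
    have hexp : exp c * exp (-c) = 1 := by rw [← exp_add, add_neg_cancel, exp_zero]
    have : 1 - exp (-c) ^ 2 ≠ 0 := by linarith
    have : exp c - exp (-c) ≠ 0 := (sub_pos.mpr (by linarith [one_lt_exp_iff.mpr hc])).ne'
    rw [sinh_eq]
    field_simp
    linear_combination -hexp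
  rw [hval, show (fun n : ℕ => exp (-c) ^ (2 * n + 1)) = fun n => exp (-c) * (exp (-c) ^ 2) ^ n by
    ext n; ring]
  exact (hasSum_geometric_of_lt_one (by positivity) hr2).mul_left (exp (-c))

theorem exists_hasSum_neg_log_one_sub_exp_odd_and_hasSum_inv_sinh {μ : ℝ} (hμ : 0 < μ) :
    ∃ T : ℝ, HasSum (fun n : ℕ => -log (1 - exp (-(2 * n + 1) * μ))) T ∧
      HasSum (fun k : ℕ => (2 * (k + 1) * sinh ((k + 1) * μ))⁻¹) T := by
  set q := exp (-μ)
  have hq0 : 0 ≤ q := (exp_pos _).le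
  have hq1 : q < 1 := exp_lt_one_iff.mpr (by linarith)
  have hexp : ∀ m : ℕ, exp (-(m * μ)) = q ^ m := fun m => by rw [← exp_nat_mul]; ring_nf
  set F : ℕ × ℕ → ℝ := fun p => q ^ ((2 * p.1 + 1) * (p.2 + 1)) / (p.2 + 1)
  have hF : Summable F := by
    refine Summable.of_nonneg_of_le (fun p => by positivity) (fun p => ?_)
      ((summable_geometric_of_lt_one hq0 hq1).mul_of_nonneg
        (summable_geometric_of_lt_one hq0 hq1) (fun _ => by positivity) (fun _ => by positivity))
    calc F p ≤ q ^ ((2 * p.1 + 1) * (p.2 + 1)) :=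
          div_le_self (by positivity) (by linarith [(p.2.cast_nonneg : (0 : ℝ) ≤ p.2)])
      _ ≤ q ^ (p.1 + p.2) := pow_le_pow_of_le_one hq0 hq1.le (by nlinarith)
      _ = q ^ p.1 * q ^ p.2 := pow_add _ _ _
  refine ⟨∑' p, F p, hF.hasSum.prod_fiberwise fun n => ?_, ?_⟩
  · have hn : exp (-(2 * n + 1) * μ) = q ^ (2 * n + 1) := by
      rw [← hexp]; push_cast; ring_nf
    have hx : |q ^ (2 * n + 1)| < 1 := by
      rw [abs_of_nonneg (by positivity)]; exact pow_lt_one₀ hq0 hq1 (by omega)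
    rw [hn]
    refine (hasSum_pow_div_log_of_abs_lt_one hx).congr_fun fun k => ?_
    rw [← pow_mul]
  · refine HasSum.congr_fun (f := fun k : ℕ => (2 * sinh ((k + 1) * μ))⁻¹ / (k + 1)) ?_
      fun k => by simp only [mul_inv]; ring
    rw [← (Equiv.prodComm ℕ ℕ).tsum_eq]
    refine (hF.comp_injective (Equiv.prodComm ℕ ℕ).injective).hasSum.prod_fiberwise fun k => ?_
    have hk : exp (-((k + 1) * μ)) = q ^ (k + 1) := by rw [← hexp]; push_cast; ring_nf
    refine ((hasSum_exp_neg_pow_two_mul_add_one (by positivity : 0 < ((k : ℝ) + 1) * μ)).div_const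
      _).congr_fun fun n => ?_
    rw [hk, ← pow_mul, mul_comm]
    rfl

theorem hasSum_mul_sinhDefect {μ T : ℝ} (hμ : 0 < μ)
    (hT : HasSum (fun k : ℕ => (2 * (k + 1) * sinh ((k + 1) * μ))⁻¹) T) :
    HasSum (fun k : ℕ => μ * sinhDefect ((k + 1) * μ)) (π ^ 2 / (12 * μ) - T) := by
  have hζ : HasSum (fun k : ℕ => (2 * μ)⁻¹ * (1 / ((k : ℝ) + 1) ^ 2)) ((2 * μ)⁻¹ * (π ^ 2 / 6)) :=
    (by simpa using (hasSum_nat_add_iff' 1).mpr hasSum_zeta_two : HasSum _ _).mul_left _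
  rw [show π ^ 2 / (12 * μ) = (2 * μ)⁻¹ * (π ^ 2 / 6) by field_simp; ring]
  refine (hζ.sub hT).congr_fun fun k => ?_
  have : 0 < sinh ((k + 1) * μ) := sinh_pos_iff.mpr (by positivity)
  rw [sinhDefect]
  field_simp

theorem log_tprod_one_add_exp_odd {lam T₁ T₂ : ℝ} (hlam : 0 < lam)
    (h₁ : HasSum (fun n : ℕ => -log (1 - exp (-(2 * n + 1) * lam))) T₁)
    (h₂ : HasSum (fun n : ℕ => -log (1 - exp (-(2 * n + 1) * (2 * lam)))) T₂) :
    log (∏' n : ℕ, (1 + exp (-(2 * (n : ℝ) + 1) * lam))) = T₁ - T₂ := by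
  have hlog : HasSum (fun n : ℕ => log (1 + exp (-(2 * (n : ℝ) + 1) * lam))) (T₁ - T₂) := by
    refine (h₁.sub h₂).congr_fun fun n => ?_
    set t := exp (-(2 * (n : ℝ) + 1) * lam)
    have ht : t < 1 := exp_lt_one_iff.mpr (by nlinarith [(n.cast_nonneg : (0 : ℝ) ≤ n)])
    have ht2 : exp (-(2 * (n : ℝ) + 1) * (2 * lam)) = t ^ 2 := by rw [sq, ← exp_add]; ring_nf
    have ht0 : 0 < t := exp_pos _
    rw [ht2, show 1 - t ^ 2 = (1 - t) * (1 + t) by ring, log_mul (by linarith) (by linarith)]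
    ring
  rw [(hasProd_of_hasSum_log (fun n => by positivity) hlog).tprod_eq, log_exp]

theorem HasSum.alternating_of_hasSum_odd {a : ℕ → ℝ} {S O : ℝ} (hS : HasSum a S)
    (hO : HasSum (fun k => a (2 * k + 1)) O) :
    HasSum (fun i => (-1) ^ i * a i) (S - 2 * O) := by
  have hE : HasSum (fun k => a (2 * k)) (S - O) := by
    have hEs : Summable (fun k => a (2 * k)) :=
      hS.summable.comp_injective (mul_right_injective₀ two_ne_zero)
    rw [hS.unique (hEs.hasSum.even_add_odd hO), add_sub_cancel_right]
    exact hEs.hasSum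
  convert HasSum.even_add_odd (f := fun i => (-1) ^ i * a i)
    (by simpa [pow_mul] using hE) (by simpa [pow_succ, pow_mul] using hO.neg) using 1
  ring

theorem Antitone.mem_Icc_of_hasSum_alternating {a : ℕ → ℝ} {l : ℝ} (ha : Antitone a)
    (hl : HasSum (fun i => (-1) ^ i * a i) l) : l ∈ Set.Icc 0 (a 0) :=
  ⟨by simpa using ha.alternating_series_le_tendsto hl.tendsto_sum_nat 0,
    by simpa using ha.tendsto_le_alternating_series hl.tendsto_sum_nat 0⟩

/-- `log ∏_{n≥1}(1+e^{-(2n-1)λ}) = π²/(24λ) + O(λ)` as `λ → 0⁺`. -/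
theorem stmt_9 :
    ∃ C > (0:ℝ), ∃ Λ > (0:ℝ), ∀ lam : ℝ, 0 < lam → lam < Λ →
      |Real.log (∏' n : ℕ, (1 + Real.exp (-(2 * (n:ℝ) + 1) * lam))) - π^2 / (24 * lam)|
        ≤ C * lam := by
  refine ⟨1 / 12, by norm_num, 1, one_pos, fun lam hlam _ => ?_⟩
  have h2lam : 0 < 2 * lam := by positivity
  obtain ⟨T₁, hlog₁, hsinh₁⟩ := exists_hasSum_neg_log_one_sub_exp_odd_and_hasSum_inv_sinh hlam
  obtain ⟨T₂, hlog₂, hsinh₂⟩ := exists_hasSum_neg_log_one_sub_exp_odd_and_hasSum_inv_sinh h2lam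
  set a : ℕ → ℝ := fun j => lam * sinhDefect ((j + 1) * lam)
  have ha : Antitone a := fun i j hij =>
    mul_le_mul_of_nonneg_left (antitoneOn_sinhDefect (Set.mem_Ioi.mpr (by positivity))
      (Set.mem_Ioi.mpr (by positivity)) (by gcongr)) hlam.le
  -- the terms of the series at `2λ` are the odd-indexed terms of the series at `λ`
  have hodd : HasSum (fun k => a (2 * k + 1)) ((π ^ 2 / (24 * lam) - T₂) / 2) := by
    rw [show 24 * lam = 12 * (2 * lam) by ring]
    refine ((hasSum_mul_sinhDefect h2lam hsinh₂).div_const 2).congr_fun fun k => ?_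
    simp only [a]; push_cast; ring_nf
  obtain ⟨hlow, hup⟩ := ha.mem_Icc_of_hasSum_alternating
    ((hasSum_mul_sinhDefect hlam hsinh₁).alternating_of_hasSum_odd hodd)
  have ha₀ : a 0 ≤ lam / 12 := by
    simpa [a, div_eq_mul_one_div lam] using
      mul_le_mul_of_nonneg_left (sinhDefect_le_one_div_twelve hlam) hlam.le
  have hπ : π ^ 2 / (12 * lam) = 2 * (π ^ 2 / (24 * lam)) := by field_simp; ring
  rw [log_tprod_one_add_exp_odd hlam hlog₁ hlog₂, abs_le]
  constructor <;> linarith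
end

section
/- For 0 < t < 1 with ρ := -log t, the sum ∑_{n≥1} n t^n/(1 - t^n) equals π²/(6ρ²) + O(1/ρ) as ρ → 0⁺. -/
open Real Filter Topology

/-!
Expanding `1/(1 - tⁿ)` geometrically and summing the double series `∑ n t^{nm}` the other way
gives the Lambert identity `∑ n tⁿ/(1 - tⁿ) = ∑ tʲ/(1 - tʲ)² = ∑ 1/(4 sinh²(jρ/2))`.
Since `v ≤ sinh v ≤ v cosh v`, the `j`-th term lies below `1/(jρ)²` by at most
`min (1/4) (1/(jρ)²) ≤ 4/(1 + jρ)²`. The terms `1/(jρ)²` sum to `π²/(6ρ²)` (Basel), and the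
errors sum to at most `4/ρ`, by comparison with the telescoping series of `1/(1 + jρ)`.
-/

lemma tsum_pnat_coe_mul_geometric {𝕜 : Type*} [NormedField 𝕜] [CompleteSpace 𝕜] {r : 𝕜}
    (hr : ‖r‖ < 1) :
    ∑' c : ℕ+, (c : 𝕜) * r ^ (c : ℕ) = r / (1 - r) ^ 2 := by
  rw [← tsum_coe_mul_geometric_of_norm_lt_one hr,
    ← tsum_zero_pnat_eq_tsum_nat (hasSum_coe_mul_geometric_of_norm_lt_one hr).summable]
  simp

/-- Both sides equal `∑ σ₁(n) rⁿ`. -/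
theorem tsum_pnat_mul_pow_div_one_sub_pow_eq_tsum_pow_div_one_sub_pow_sq {𝕜 : Type*}
    [NontriviallyNormedField 𝕜] [CompleteSpace 𝕜] [NormSMulClass ℤ 𝕜] {r : 𝕜} (hr : ‖r‖ < 1) :
    ∑' n : ℕ+, (n : 𝕜) * r ^ (n : ℕ) / (1 - r ^ (n : ℕ)) =
      ∑' n : ℕ+, r ^ (n : ℕ) / (1 - r ^ (n : ℕ)) ^ 2 := by
  have h := tsum_pow_div_one_sub_eq_tsum_sigma hr 1
  rw [← tsum_prod_pow_eq_tsum_sigma 1 hr] at h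
  simp only [pow_one] at h
  rw [h]
  refine tsum_congr fun d => ?_
  have hrd : ‖r ^ (d : ℕ)‖ < 1 := by
    rw [norm_pow]; exact pow_lt_one₀ (norm_nonneg r) hr d.ne_zero
  rw [← tsum_pnat_coe_mul_geometric hrd]
  simp only [pow_mul]

theorem Real.sinh_le_mul_cosh {x : ℝ} (hx : 0 ≤ x) : sinh x ≤ x * cosh x := by
  have hmono : MonotoneOn (fun x => x * cosh x - sinh x) (Set.Ici 0) := by
    refine monotoneOn_of_deriv_nonneg (convex_Ici 0) (by fun_prop) (by fun_prop) fun y hy => ?_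
    rw [interior_Ici, Set.mem_Ioi] at hy
    have hderiv := ((hasDerivAt_id y).mul (hasDerivAt_cosh y)).sub (hasDerivAt_sinh y)
    rw [show (fun x => x * cosh x - sinh x) = (id * cosh - sinh) from rfl, hderiv.deriv]
    simp only [id, one_mul, add_sub_cancel_left]
    exact mul_nonneg hy.le (sinh_nonneg_iff.2 hy.le)
  simpa using hmono Set.self_mem_Ici hx hx

lemma exp_neg_div_one_sub_exp_neg_sq (u : ℝ) :
    exp (-u) / (1 - exp (-u)) ^ 2 = 1 / (4 * sinh (u / 2) ^ 2) := by
  have hb : exp (-u) = exp (-(u / 2)) ^ 2 := by rw [← exp_nat_mul]; ring_nf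
  have ha : exp (u / 2) = (exp (-(u / 2)))⁻¹ := by rw [exp_neg, inv_inv]
  rw [sinh_eq, hb, ha]
  set b := exp (-(u / 2))
  field_simp
  ring

lemma exp_neg_div_one_sub_exp_neg_sq_le {u : ℝ} (hu : 0 < u) :
    exp (-u) / (1 - exp (-u)) ^ 2 ≤ 1 / u ^ 2 := by
  rw [exp_neg_div_one_sub_exp_neg_sq]
  have hs := self_lt_sinh_iff.2 (half_pos hu)
  exact one_div_le_one_div_of_le (by positivity) (by nlinarith)

lemma one_div_sq_sub_exp_neg_div_one_sub_exp_neg_sq_le_quarter {u : ℝ} (hu : 0 < u) :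
    1 / u ^ 2 - exp (-u) / (1 - exp (-u)) ^ 2 ≤ 1 / 4 := by
  rw [exp_neg_div_one_sub_exp_neg_sq]
  obtain ⟨v, rfl⟩ : ∃ v, u = 2 * v := ⟨u / 2, by ring⟩
  have hv : 0 < v := by linarith
  rw [show 2 * v / 2 = v by ring]
  have hs : v < sinh v := self_lt_sinh_iff.2 hv
  have hsc : sinh v ≤ v * cosh v := sinh_le_mul_cosh hv.le
  have hsq : sinh v ^ 2 - v ^ 2 ≤ v ^ 2 * sinh v ^ 2 := by nlinarith [cosh_sq v]
  rw [div_sub_div _ _ (by positivity) (by positivity), div_le_iff₀ (by positivity)]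
  nlinarith

lemma one_div_sq_sub_exp_neg_div_one_sub_exp_neg_sq_le_four_div {u : ℝ} (hu : 0 < u) :
    1 / u ^ 2 - exp (-u) / (1 - exp (-u)) ^ 2 ≤ 4 / (1 + u) ^ 2 := by
  rcases le_total u 1 with h | h
  · calc _ ≤ 1 / 4 := one_div_sq_sub_exp_neg_div_one_sub_exp_neg_sq_le_quarter hu
      _ ≤ 4 / (1 + u) ^ 2 := by rw [div_le_div_iff₀ (by norm_num) (by positivity)]; nlinarith
  · have : 0 ≤ exp (-u) / (1 - exp (-u)) ^ 2 := by positivity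
    calc _ ≤ 1 / u ^ 2 := by linarith
      _ ≤ 4 / (1 + u) ^ 2 := by rw [div_le_div_iff₀ (by positivity) (by positivity)]; nlinarith

lemma Antitone.hasSum_sub_succ {f : ℕ → ℝ} {l : ℝ} (hf : Antitone f)
    (hl : Tendsto f atTop (𝓝 l)) : HasSum (fun n => f n - f (n + 1)) (f 0 - l) := by
  rw [hasSum_iff_tendsto_nat_of_nonneg fun n => sub_nonneg.2 (hf n.le_succ)]
  simpa only [Finset.sum_range_sub'] using hl.const_sub (f 0)

lemma hasSum_one_div_one_add_mul_sub {ρ : ℝ} (hρ : 0 < ρ) :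
    HasSum (fun n : ℕ => 1 / (1 + n * ρ) - 1 / (1 + (n + 1) * ρ)) 1 := by
  have hanti : Antitone fun n : ℕ => 1 / (1 + n * ρ) := fun m n h => by
    have : (m : ℝ) ≤ n := by exact_mod_cast h
    dsimp only
    gcongr
  have hlim : Tendsto (fun n : ℕ => 1 / (1 + n * ρ)) atTop (𝓝 0) :=
    tendsto_const_nhds.div_atTop <| tendsto_atTop_add_const_left _ _ <|
      tendsto_natCast_atTop_atTop.atTop_mul_const hρ
  simpa using hanti.hasSum_sub_succ hlim

lemma one_div_one_add_mul_sq_le {ρ x : ℝ} (hρ : 0 < ρ) (hx : 0 ≤ x) :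
    1 / (1 + (x + 1) * ρ) ^ 2 ≤ (1 / (1 + x * ρ) - 1 / (1 + (x + 1) * ρ)) / ρ := by
  have h : (1 / (1 + x * ρ) - 1 / (1 + (x + 1) * ρ)) / ρ
      = 1 / ((1 + x * ρ) * (1 + (x + 1) * ρ)) := by
    field_simp
    ring
  have hpos : 0 < 1 + (x + 1) * ρ := by positivity
  rw [h]
  exact one_div_le_one_div_of_le (by positivity) (by nlinarith [mul_pos hρ hpos])

lemma hasSum_one_div_succ_mul_sq (ρ : ℝ) :
    HasSum (fun n : ℕ => 1 / (((n : ℝ) + 1) * ρ) ^ 2) (π ^ 2 / (6 * ρ ^ 2)) := by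
  have h := ((hasSum_nat_add_iff' 1).2 hasSum_zeta_two).div_const (ρ ^ 2)
  simp only [Nat.cast_add, Nat.cast_one, Finset.range_one, Finset.sum_singleton, Nat.cast_zero,
    ne_eq, OfNat.ofNat_ne_zero, not_false_eq_true, zero_pow, div_zero, sub_zero] at h
  have hf : (fun n : ℕ => 1 / (((n : ℝ) + 1) * ρ) ^ 2) =
      fun n : ℕ => 1 / ((n : ℝ) + 1) ^ 2 / ρ ^ 2 := by
    funext n; rw [mul_pow, div_div]
  rwa [hf, ← div_div]

lemma abs_tsum_sub_le_of_hasSum {ι : Type*} {f g b : ι → ℝ} {a B : ℝ} (hg : HasSum g a)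
    (hb : HasSum b B) (hf : 0 ≤ f) (hfg : f ≤ g) (hgf : ∀ i, g i - f i ≤ b i) :
    |∑' i, f i - a| ≤ B := by
  have hfs : Summable f := hg.summable.of_nonneg_of_le hf hfg
  rw [abs_of_nonpos (sub_nonpos.2 (hg.tsum_eq ▸ hfs.tsum_le_tsum hfg hg.summable)), neg_sub,
    ← hg.tsum_eq, ← hg.summable.tsum_sub hfs, ← hb.tsum_eq]
  exact (hg.summable.sub hfs).tsum_le_tsum hgf hb.summable

/-- `∑_{n≥1} n t^n/(1-t^n) = π²/(6ρ²) + O(1/ρ)` with `t = e^{-ρ}` as `ρ → 0⁺`. -/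
theorem stmt_14 :
    ∃ C > (0:ℝ), ∃ ρ₀ > (0:ℝ), ∀ ρ : ℝ, 0 < ρ → ρ < ρ₀ →
      |(∑' n : ℕ, ((n:ℝ) + 1) * Real.exp (-((n:ℝ) + 1) * ρ) /
          (1 - Real.exp (-((n:ℝ) + 1) * ρ))) - π^2 / (6 * ρ^2)| ≤ C / ρ := by
  refine ⟨4, by norm_num, 1, one_pos, fun ρ hρ _ => ?_⟩
  have hpow (n : ℕ) : exp (-ρ) ^ (n + 1) = exp (-((n : ℝ) + 1) * ρ) := by
    rw [← exp_nat_mul]; push_cast; ring_nf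
  have hlambert := tsum_pnat_mul_pow_div_one_sub_pow_eq_tsum_pow_div_one_sub_pow_sq (r := exp (-ρ))
    (by rw [norm_of_nonneg (exp_pos _).le, exp_lt_one_iff]; linarith)
  rw [tsum_pnat_eq_tsum_succ (f := fun n => (n : ℝ) * exp (-ρ) ^ n / (1 - exp (-ρ) ^ n)),
    tsum_pnat_eq_tsum_succ (f := fun n => exp (-ρ) ^ n / (1 - exp (-ρ) ^ n) ^ 2)] at hlambert
  simp only [hpow, Nat.cast_succ, neg_mul] at hlambert
  simp only [neg_mul]
  rw [hlambert]
  have hbound := ((hasSum_one_div_one_add_mul_sub hρ).div_const ρ).mul_left 4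
  rw [mul_one_div] at hbound
  have hu (n : ℕ) : 0 < ((n : ℝ) + 1) * ρ := by positivity
  refine abs_tsum_sub_le_of_hasSum (hasSum_one_div_succ_mul_sq ρ) hbound (fun n => by positivity)
    (fun n => exp_neg_div_one_sub_exp_neg_sq_le (hu n)) fun n => ?_
  calc _ ≤ 4 / (1 + ((n : ℝ) + 1) * ρ) ^ 2 :=
        one_div_sq_sub_exp_neg_div_one_sub_exp_neg_sq_le_four_div (hu n)
    _ ≤ _ := by
        rw [← mul_one_div 4]
        exact mul_le_mul_of_nonneg_left (one_div_one_add_mul_sq_le hρ n.cast_nonneg) zero_le_four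
end

section
/- For 0 < t < 1 with ρ := -log t, the sum ∑_{n≥1} n² t^n/(1-t^n)² equals π²/(3ρ³) + O(1/ρ²) as ρ → 0⁺. -/
/-!
With `t = e^{-ρ}` the `n`-th summand is `f(n)` for `f(x) = x² e^{-ρx} / (1 - e^{-ρx})²
= (x / (2 sinh (ρx/2)))²`. Since `sinh u / u` increases from `1`, `f` is decreasing on `(0, ∞)`
and bounded by `1/ρ²`, so the sum of `f` over the positive integers differs from `∫₀^∞ f` by at
most `1/ρ²`. Expanding `f(x) = ∑ₖ k x² e^{-kρx}` and integrating termwise gives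
`∫₀^∞ f = ∑ₖ 2 / (k² ρ³) = π² / (3ρ³)`.
-/

open Real MeasureTheory Set Filter

namespace Real

lemma convexOn_sinh : ConvexOn ℝ (Ici 0) sinh := by
  refine MonotoneOn.convexOn_of_deriv (convex_Ici 0) continuous_sinh.continuousOn
    differentiable_sinh.differentiableOn ?_
  rw [deriv_sinh, interior_Ici]
  intro x hx y hy hxy
  exact cosh_le_cosh.2 (by rwa [abs_of_pos hx, abs_of_pos hy])

lemma monotoneOn_sinh_div_self : MonotoneOn (fun u ↦ sinh u / u) (Ioi 0) := by
  intro x hx y hy hxy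
  simpa using convexOn_sinh.secant_mono self_mem_Ici (mem_Ici.2 (mem_Ioi.1 hx).le)
    (mem_Ici.2 (mem_Ioi.1 hy).le) hx.ne' hy.ne' hxy

lemma one_le_sinh_div_self {u : ℝ} (hu : 0 < u) : 1 ≤ sinh u / u :=
  (one_le_div hu).2 (self_le_sinh_iff.2 hu.le)

lemma exp_neg_two_mul (u : ℝ) : exp (-(2 * u)) = exp (-u) ^ 2 := by
  rw [← exp_nat_mul]
  ring_nf

lemma one_sub_exp_neg_two_mul (u : ℝ) : 1 - exp (-(2 * u)) = 2 * exp (-u) * sinh u := by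
  have h1 : exp (-u) * exp u = 1 := by rw [← exp_add, neg_add_cancel, exp_zero]
  rw [sinh_eq, exp_neg_two_mul]
  linear_combination -h1

end Real

lemma integral_sq_mul_exp_neg_mul_Ioi {c : ℝ} (hc : 0 < c) :
    ∫ x in Ioi 0, x ^ 2 * exp (-(c * x)) = 2 / c ^ 3 := by
  have h := integral_rpow_mul_exp_neg_mul_Ioi (a := 3) (by norm_num) hc
  have hΓ : Gamma 3 = 2 := by
    rw [show (3 : ℝ) = (2 : ℕ) + 1 by norm_num, Gamma_nat_eq_factorial]; norm_num
  norm_num [hΓ] at h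
  rw [h]
  ring

lemma abs_tsum_sub_integral_Ioi_le {f : ℝ → ℝ} {B : ℝ} (anti : AntitoneOn f (Ioi 0))
    (le_bound : ∀ x ∈ Ioi 0, f x ≤ B) (nonneg : ∀ x ∈ Ioi 0, 0 ≤ f x)
    (integrable : IntegrableOn f (Ioi 0)) :
    |∑' n : ℕ, f (n + 1 : ℕ) - ∫ x in Ioi 0, f x| ≤ B := by
  -- extended by `B` at `0`, `f` becomes antitone on `[0, ∞)`, as the integral test requires
  set g := Function.update f 0 B
  have hg : EqOn g f (Ioi 0) := fun x hx ↦ Function.update_of_ne (ne_of_gt hx) _ _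
  have g_anti : AntitoneOn g (Ici 0) := by
    intro x hx y hy hxy
    obtain rfl | hy' := (mem_Ici.1 hy).eq_or_lt
    · rw [le_antisymm hxy hx]
    rw [hg hy']
    obtain rfl | hx' := (mem_Ici.1 hx).eq_or_lt
    · simpa [g] using le_bound y hy'
    · rw [hg hx']
      exact anti hx' hy' hxy
  have g_int : IntegrableOn g (Ioi 0) := integrable.congr_fun hg.symm measurableSet_Ioi
  have g_nonneg (x : ℝ) (hx : x ∈ Ioi 0) : 0 ≤ g x := hg hx ▸ nonneg x hx
  have g_summable := g_anti.summable_of_integrableOn_Ioi_zero g_int g_nonneg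
  have upper := g_anti.tsum_add_one_le_integral g_int g_nonneg
  have lower := g_anti.integral_le_tsum g_summable g_nonneg
  rw [g_summable.tsum_eq_zero_add] at lower
  have hterms (n : ℕ) : g (n + 1 : ℕ) = f (n + 1 : ℕ) := hg (mem_Ioi.2 (by positivity))
  simp only [hterms, setIntegral_congr_fun measurableSet_Ioi hg, Nat.cast_zero,
    Function.update_self, g] at upper lower
  rw [abs_sub_le_iff]
  constructor <;> linarith

noncomputable def varianceTerm (ρ x : ℝ) : ℝ := x ^ 2 * exp (-x * ρ) / (1 - exp (-x * ρ)) ^ 2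

lemma varianceTerm_nonneg (ρ x : ℝ) : 0 ≤ varianceTerm ρ x := by
  unfold varianceTerm
  positivity

section varianceTerm

variable {ρ : ℝ}

lemma varianceTerm_eq_one_div {x : ℝ} (hρ : 0 < ρ) (hx : 0 < x) :
    varianceTerm ρ x = 1 / (ρ ^ 2 * (sinh (x * ρ / 2) / (x * ρ / 2)) ^ 2) := by
  set u := x * ρ / 2
  have hsinh : 0 < sinh u := sinh_pos_iff.2 (by positivity)
  have hx : x = 2 * u / ρ := by field_simp [u]; ring
  rw [varianceTerm, show -x * ρ = -(2 * u) by ring, one_sub_exp_neg_two_mul,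
    exp_neg_two_mul, hx]
  field_simp

lemma varianceTerm_le {x : ℝ} (hρ : 0 < ρ) (hx : 0 < x) : varianceTerm ρ x ≤ 1 / ρ ^ 2 := by
  rw [varianceTerm_eq_one_div hρ hx]
  have := one_le_sinh_div_self (u := x * ρ / 2) (by positivity)
  gcongr
  exact le_mul_of_one_le_right (by positivity) (one_le_pow₀ this)

lemma antitoneOn_varianceTerm (hρ : 0 < ρ) : AntitoneOn (varianceTerm ρ) (Ioi 0) := by
  intro x hx y hy hxy
  have hu : 0 < x * ρ / 2 := by have := mem_Ioi.1 hx; positivity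
  have hv : 0 < y * ρ / 2 := by have := mem_Ioi.1 hy; positivity
  rw [varianceTerm_eq_one_div hρ hx, varianceTerm_eq_one_div hρ hy]
  have := (one_le_sinh_div_self hu).trans_lt' one_pos
  gcongr 1 / (_ * ?_ ^ 2)
  exact monotoneOn_sinh_div_self hu hv (by gcongr)

lemma hasSum_varianceTerm {x : ℝ} (hρ : 0 < ρ) (hx : 0 < x) :
    HasSum (fun n : ℕ ↦ n * (x ^ 2 * exp (-(n * ρ * x)))) (varianceTerm ρ x) := by
  have hq : ‖exp (-x * ρ)‖ < 1 := by
    rw [norm_of_nonneg (exp_nonneg _), exp_lt_one_iff]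
    nlinarith
  have hterm (n : ℕ) :
      (n : ℝ) * (x ^ 2 * exp (-(n * ρ * x))) = x ^ 2 * (n * exp (-x * ρ) ^ n) := by
    rw [← exp_nat_mul]
    ring_nf
  rw [funext hterm, varianceTerm, mul_div_assoc]
  exact (hasSum_coe_mul_geometric_of_norm_lt_one hq).mul_left (x ^ 2)

lemma integral_varianceTerm (hρ : 0 < ρ) :
    ∫ x in Ioi 0, varianceTerm ρ x = π ^ 2 / (3 * ρ ^ 3) := by
  set F : ℕ → ℝ → ℝ := fun n x ↦ n * (x ^ 2 * exp (-(n * ρ * x)))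
  have hF_nonneg (n : ℕ) (x : ℝ) : 0 ≤ F n x := by positivity
  have hF_int (n : ℕ) : IntegrableOn (F n) (Ioi 0) := by
    rcases n.eq_zero_or_pos with rfl | hn
    · simp [F]
    · refine .const_mul (.of_integral_ne_zero ?_) _
      rw [integral_sq_mul_exp_neg_mul_Ioi (by positivity)]
      positivity
  -- at `n = 0` both sides vanish, the right one because `1 / 0 = 0`
  have hF_integral (n : ℕ) : ∫ x in Ioi 0, F n x = 2 / ρ ^ 3 * (1 / n ^ 2) := by
    rcases n.eq_zero_or_pos with rfl | hn
    · simp [F]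
    · simp only [F]
      rw [integral_const_mul, integral_sq_mul_exp_neg_mul_Ioi (by positivity)]
      field_simp
  have hF_norm (n : ℕ) : ∫ x in Ioi 0, ‖F n x‖ = ∫ x in Ioi 0, F n x :=
    setIntegral_congr_fun measurableSet_Ioi fun x _ ↦ norm_of_nonneg (hF_nonneg n x)
  have hsum_int : HasSum (fun n ↦ ∫ x in Ioi 0, F n x) (2 / ρ ^ 3 * (π ^ 2 / 6)) := by
    simpa only [hF_integral] using hasSum_zeta_two.mul_left (2 / ρ ^ 3)
  have hsum := hasSum_integral_of_summable_integral_norm hF_int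
    (by simpa only [hF_norm] using hsum_int.summable)
  rw [setIntegral_congr_fun measurableSet_Ioi fun x hx ↦ (hasSum_varianceTerm hρ hx).tsum_eq.symm,
    ← hsum_int.unique hsum]
  ring

lemma integrableOn_varianceTerm (hρ : 0 < ρ) : IntegrableOn (varianceTerm ρ) (Ioi 0) :=
  .of_integral_ne_zero (by rw [integral_varianceTerm hρ]; positivity)

end varianceTerm

/-- `∑_{n≥1} n² t^n/(1-t^n)² = π²/(3ρ³) + O(1/ρ²)` with `t = e^{-ρ}` as `ρ → 0⁺`. -/
theorem stmt_15 :
    ∃ C > (0:ℝ), ∃ ρ₀ > (0:ℝ), ∀ ρ : ℝ, 0 < ρ → ρ < ρ₀ →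
      |(∑' n : ℕ, ((n:ℝ) + 1)^2 * Real.exp (-((n:ℝ) + 1) * ρ) /
          (1 - Real.exp (-((n:ℝ) + 1) * ρ))^2) - π^2 / (3 * ρ^3)| ≤ C / ρ^2 := by
  refine ⟨1, one_pos, 1, one_pos, fun ρ hρ _ ↦ ?_⟩
  have key := abs_tsum_sub_integral_Ioi_le (antitoneOn_varianceTerm hρ)
    (fun x hx ↦ varianceTerm_le hρ hx) (fun x _ ↦ varianceTerm_nonneg ρ x)
    (integrableOn_varianceTerm hρ)
  rw [integral_varianceTerm hρ] at key
  simpa only [varianceTerm, Nat.cast_add, Nat.cast_one] using key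
end
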